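/- arXiv:2403.17669 — 3 statements merged into one kernel-verified Lean document; each statement's English description precedes it below -/
import Mathlib

section
/- Let d ≥ 1 and k ≥ 2 be integers and fix 1 ≤ i < j ≤ k. There exists a constant C = C(k, d) such that for every T ≥ 0 and every x ∈ (ℤ^d)^k, Σ_{w ∈ (ℤ^d)^k} 1{‖w_i − w_j‖ = 1} (T + ‖x − w‖ + 1)^{−((k−1)d + 1)} ≤ C / (T + 1). -/
/-!
Split `w` into its `j`-th particle and the remaining `m = (k - 1) d` coordinates `v`. For fixed `v`
the constraint `‖w_i - w_j‖ = 1` leaves at most `3 ^ d` positions for `w_j`, while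
`T + ‖x - w‖ + 1 ≥ (T + 1 + |v - v_x|₁) / (m + 1)`, with `v_x` the matching coordinates of `x`.
This reduces the claim to `∑_{u ∈ ℤ^m} (A + |u|₁)^{-(m + 1)} ≤ 4 ^ m / A` for `A ≥ 1`, proved by
summing out one coordinate at a time: each step costs a factor `4` and lowers the exponent by one,
through `∑_{z ∈ ℤ} (A + |z|)^{-(s + 2)} ≤ 4 / A ^ (s + 1)`.
-/

open scoped Classical

noncomputable section

namespace SSEPPaper

/-- Configurations of `k` labelled particles on `ℤ^d`. -/
abbrev Conf (d k : ℕ) := Fin k → Fin d → ℤ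

/-- Euclidean norm of an integer vector in `ℤ^d`. -/
def vnorm {d : ℕ} (v : Fin d → ℤ) : ℝ := Real.sqrt (∑ j, ((v j : ℝ)) ^ 2)

/-- Euclidean norm on `(ℝ^d)^k` of an integer configuration. -/
def cnorm {d k : ℕ} (x : Conf d k) : ℝ := Real.sqrt (∑ i, ∑ j, ((x i j : ℝ)) ^ 2)

/-- The set `𝕊^k` of configurations with pairwise distinct particle positions. -/
def SSet (d k : ℕ) : Set (Conf d k) := {x | ∀ i j : Fin k, i ≠ j → x i ≠ x j}

/-- Swap of the coordinates `i` and `j` of a configuration, i.e. `σ^{i,j}x`. -/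
def cswap {d k : ℕ} (i j : Fin k) (x : Conf d k) : Conf d k := x ∘ Equiv.swap i j

/-- `δ^{i,j}w`: the configuration which agrees with `w` except that its `j`-th coordinate
is replaced by `w i`. -/
def cdelta {d k : ℕ} (i j : Fin k) (w : Conf d k) : Conf d k := Function.update w j (w i)

/-- Kronecker delta function at `y`. -/
def deltaFn {α : Type*} (y : α) : α → ℝ := fun x => if x = y then 1 else 0

/-- Generator of the labelled exclusion process, extended to all of `(ℤ^d)^k`. -/
def Lexc {d k : ℕ} (f : Conf d k → ℝ) : Conf d k → ℝ := fun x =>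
  (∑' y : Conf d k, if cnorm (y - x) = 1 ∧ y ∈ SSet d k then f y - f x else 0) +
    ∑ i : Fin k, ∑ j : Fin k,
      if i < j ∧ vnorm (x i - x j) = 1 ∧ x ∈ SSet d k then f (cswap i j x) - f x else 0

/-- Generator of `k` independent simple random walks on `ℤ^d`. -/
def Lrw {d k : ℕ} (f : Conf d k → ℝ) : Conf d k → ℝ := fun x =>
  ∑' z : Conf d k, if cnorm (z - x) = 1 then f z - f x else 0

/-- Generator (discrete Laplacian) of a single simple random walk on `ℤ^d`. -/
def Lap {d : ℕ} (f : (Fin d → ℤ) → ℝ) : (Fin d → ℤ) → ℝ := fun x =>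
  ∑' y : Fin d → ℤ, if vnorm (y - x) = 1 then f y - f x else 0

/-- Transition probabilities `p_t^ℓ(x,y) = (e^{tL^ℓ} δ_y)(x)` of the labelled exclusion
process, given by the exponential power series of the generator. -/
def ptl {d k : ℕ} (t : ℝ) (x y : Conf d k) : ℝ :=
  ∑' n : ℕ, t ^ n / n.factorial * ((Lexc (d := d) (k := k))^[n] (deltaFn y)) x

/-- Transition probabilities `p_t^{rw}(x,y) = (e^{tL^{rw}} δ_y)(x)` of `k` independent
simple random walks on `ℤ^d`. -/
def ptrw {d k : ℕ} (t : ℝ) (x y : Conf d k) : ℝ :=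
  ∑' n : ℕ, t ^ n / n.factorial * ((Lrw (d := d) (k := k))^[n] (deltaFn y)) x

/-- Transition probabilities `p_t(x,y) = (e^{tΔ} δ_y)(x)` of a single continuous-time
simple random walk on `ℤ^d`. -/
def pt1 {d : ℕ} (t : ℝ) (x y : Fin d → ℤ) : ℝ :=
  ∑' n : ℕ, t ^ n / n.factorial * ((Lap (d := d))^[n] (deltaFn y)) x

/-- The configuration `e₁₁ = ((1,0,…,0),(0,…,0),…,(0,…,0))`. -/
def e11 (d k : ℕ) : Conf d k := fun i j => if i.val = 0 ∧ j.val = 0 then 1 else 0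

end SSEPPaper

open scoped ENNReal

theorem sum_range_inv_add_sq_le {A : ℝ} (hA : 1 ≤ A) (N : ℕ) :
    ∑ n ∈ Finset.range N, ((A + n) ^ 2)⁻¹ ≤ 2 / A - 2 / (A + N) := by
  induction N with
  | zero => simp
  | succ N ih =>
    have hpos : 0 < A + N := by positivity
    -- telescoping: `a + 1 ≤ 2 a` for `a ≥ 1` gives `a⁻² ≤ 2 / a - 2 / (a + 1)`
    have step : ((A + N) ^ 2)⁻¹ ≤ 2 / (A + N) - 2 / (A + N + 1) := by
      rw [div_sub_div _ _ hpos.ne' (by positivity), inv_eq_one_div,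
        div_le_div_iff₀ (by positivity) (by positivity)]
      nlinarith
    rw [Finset.sum_range_succ, Nat.cast_succ, ← add_assoc]
    linarith

theorem tsum_nat_ofReal_inv_add_sq_le {A : ℝ} (hA : 1 ≤ A) :
    ∑' n : ℕ, ENNReal.ofReal ((A + n) ^ 2)⁻¹ ≤ ENNReal.ofReal (2 / A) := by
  refine ENNReal.tsum_le_of_sum_range_le fun N => ?_
  rw [← ENNReal.ofReal_sum_of_nonneg fun n _ => by positivity]
  refine ENNReal.ofReal_le_ofReal ((sum_range_inv_add_sq_le hA N).trans ?_)
  have : 0 ≤ 2 / (A + N) := by positivity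
  linarith

theorem tsum_int_ofReal_inv_add_abs_sq_le {A : ℝ} (hA : 1 ≤ A) :
    ∑' z : ℤ, ENNReal.ofReal ((A + |(z : ℝ)|) ^ 2)⁻¹ ≤ ENNReal.ofReal (4 / A) := by
  have hneg : ∀ n : ℕ, ENNReal.ofReal ((A + |((-(n + 1) : ℤ) : ℝ)|) ^ 2)⁻¹
      ≤ ENNReal.ofReal ((A + n) ^ 2)⁻¹ := fun n => by
    have habs : |((-(n + 1) : ℤ) : ℝ)| = n + 1 := by
      push_cast
      rw [abs_neg, abs_of_nonneg (by positivity)]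
    refine ENNReal.ofReal_le_ofReal (inv_anti₀ (by positivity) ?_)
    rw [habs]
    gcongr
    linarith
  rw [tsum_of_nat_of_neg_add_one ENNReal.summable ENNReal.summable]
  calc _ ≤ ∑' n : ℕ, ENNReal.ofReal ((A + n) ^ 2)⁻¹ + ∑' n : ℕ, ENNReal.ofReal ((A + n) ^ 2)⁻¹ :=
        add_le_add (by simp) (ENNReal.tsum_le_tsum hneg)
    _ ≤ ENNReal.ofReal (2 / A) + ENNReal.ofReal (2 / A) := by
        gcongr <;> exact tsum_nat_ofReal_inv_add_sq_le hA
    _ = ENNReal.ofReal (4 / A) := by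
        rw [← ENNReal.ofReal_add (by positivity) (by positivity)]
        ring_nf

theorem tsum_int_ofReal_inv_add_abs_pow_le {A : ℝ} (hA : 1 ≤ A) (s : ℕ) :
    ∑' z : ℤ, ENNReal.ofReal ((A + |(z : ℝ)|) ^ (s + 2))⁻¹
      ≤ ENNReal.ofReal (4 / A ^ (s + 1)) := by
  have hterm : ∀ z : ℤ, ENNReal.ofReal ((A + |(z : ℝ)|) ^ (s + 2))⁻¹
      ≤ ENNReal.ofReal (A ^ s)⁻¹ * ENNReal.ofReal ((A + |(z : ℝ)|) ^ 2)⁻¹ := fun z => by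
    rw [← ENNReal.ofReal_mul (by positivity), ← mul_inv, pow_add]
    refine ENNReal.ofReal_le_ofReal (inv_anti₀ (by positivity) ?_)
    gcongr
    linarith [abs_nonneg (z : ℝ)]
  calc _ ≤ ∑' z : ℤ, ENNReal.ofReal (A ^ s)⁻¹ * ENNReal.ofReal ((A + |(z : ℝ)|) ^ 2)⁻¹ :=
        ENNReal.tsum_le_tsum hterm
    _ ≤ ENNReal.ofReal (A ^ s)⁻¹ * ENNReal.ofReal (4 / A) := by
        rw [ENNReal.tsum_mul_left]
        gcongr
        exact tsum_int_ofReal_inv_add_abs_sq_le hA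
    _ = ENNReal.ofReal (4 / A ^ (s + 1)) := by
        rw [← ENNReal.ofReal_mul (by positivity)]
        congr 1
        field_simp
        ring

theorem tsum_fin_ofReal_inv_add_l1_pow_le (n s : ℕ) {A : ℝ} (hA : 1 ≤ A) :
    ∑' u : Fin n → ℤ, ENNReal.ofReal ((A + ∑ p, |(u p : ℝ)|) ^ (n + s + 1))⁻¹
      ≤ ENNReal.ofReal (4 ^ n / A ^ (s + 1)) := by
  induction n generalizing s A with
  | zero => simp [tsum_fintype, div_eq_mul_inv]
  | succ n ih =>
    have hinner : ∀ z : ℤ,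
        ∑' u : Fin n → ℤ, ENNReal.ofReal ((A + |(z : ℝ)| + ∑ p, |(u p : ℝ)|) ^ (n + (s + 1) + 1))⁻¹
          ≤ ENNReal.ofReal (4 ^ n) * ENNReal.ofReal ((A + |(z : ℝ)|) ^ (s + 2))⁻¹ := fun z => by
      rw [← ENNReal.ofReal_mul (by positivity), ← div_eq_mul_inv]
      exact ih (s + 1) (by linarith [abs_nonneg (z : ℝ)])
    rw [← (Fin.consEquiv fun _ => ℤ).tsum_eq, ENNReal.tsum_prod']
    calc _ = ∑' z : ℤ, ∑' u : Fin n → ℤ,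
          ENNReal.ofReal ((A + |(z : ℝ)| + ∑ p, |(u p : ℝ)|) ^ (n + (s + 1) + 1))⁻¹ := by
          simp only [Fin.consEquiv_apply, Fin.sum_univ_succ, Fin.cons_zero, Fin.cons_succ,
            add_assoc]
          ring_nf
      _ ≤ ∑' z : ℤ, ENNReal.ofReal (4 ^ n) * ENNReal.ofReal ((A + |(z : ℝ)|) ^ (s + 2))⁻¹ :=
          ENNReal.tsum_le_tsum hinner
      _ ≤ ENNReal.ofReal (4 ^ n) * ENNReal.ofReal (4 / A ^ (s + 1)) := by
          rw [ENNReal.tsum_mul_left]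
          gcongr
          exact tsum_int_ofReal_inv_add_abs_pow_le hA s
      _ = ENNReal.ofReal (4 ^ (n + 1) / A ^ (s + 1)) := by
          rw [← ENNReal.ofReal_mul (by positivity), ← mul_div_assoc, ← pow_succ]

theorem tsum_ofReal_inv_add_l1_dist_pow_le {ι : Type*} [Fintype ι] (c : ι → ℤ) (s : ℕ) {A : ℝ}
    (hA : 1 ≤ A) :
    ∑' u : ι → ℤ, ENNReal.ofReal ((A + ∑ p, |(u p - c p : ℝ)|) ^ (Fintype.card ι + s + 1))⁻¹
      ≤ ENNReal.ofReal (4 ^ Fintype.card ι / A ^ (s + 1)) := by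
  let e : (ι → ℤ) ≃ (Fin (Fintype.card ι) → ℤ) :=
    (Equiv.subRight c).trans ((Fintype.equivFin ι).arrowCongr (Equiv.refl ℤ))
  have hl1 : ∀ u : ι → ℤ, ∑ p, |(u p - c p : ℝ)| = ∑ q, |(e u q : ℝ)| := fun u => by
    rw [← (Fintype.equivFin ι).sum_comp]
    simp [e]
  simp_rw [hl1]
  rw [e.tsum_eq (fun u => ENNReal.ofReal ((A + ∑ q, |(u q : ℝ)|) ^ (Fintype.card ι + s + 1))⁻¹)]
  exact tsum_fin_ofReal_inv_add_l1_pow_le _ s hA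

theorem tsum_ofReal_inv_add_sum_sum_abs_sub_pow_le {α β : Type*} [Fintype α] [Fintype β]
    (c : α → β → ℤ) {A : ℝ} (hA : 1 ≤ A) :
    ∑' v : α → β → ℤ, ENNReal.ofReal
        ((A + ∑ a, ∑ b, |(v a b - c a b : ℝ)|) ^ (Fintype.card α * Fintype.card β + 1))⁻¹
      ≤ ENNReal.ofReal (4 ^ (Fintype.card α * Fintype.card β) / A) := by
  have := tsum_ofReal_inv_add_l1_dist_pow_le (Function.uncurry c) 0 hA
  simp only [Fintype.card_prod, Fintype.sum_prod_type, add_zero, zero_add, pow_one] at this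
  rw [← (Equiv.curry α β ℤ).tsum_eq]
  simpa only [Equiv.curry_apply, Function.curry, Function.uncurry_apply_pair] using this

theorem summable_and_tsum_le_of_tsum_ofReal_le {α : Type*} {f : α → ℝ} (hf : ∀ a, 0 ≤ f a)
    {c : ℝ} (hc : 0 ≤ c) (h : ∑' a, ENNReal.ofReal (f a) ≤ ENNReal.ofReal c) :
    Summable f ∧ ∑' a, f a ≤ c := by
  have hs : Summable f :=
    (ENNReal.summable_toReal (ne_top_of_le_ne_top ENNReal.ofReal_ne_top h)).congr
      fun a => ENNReal.toReal_ofReal (hf a)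
  refine ⟨hs, ?_⟩
  rwa [← ENNReal.ofReal_le_ofReal_iff hc, ENNReal.ofReal_tsum_of_nonneg hf hs]

namespace SSEPPaper

section

variable {d k : ℕ}

theorem abs_le_one_of_vnorm_eq_one {z : Fin d → ℤ} (h : vnorm z = 1) (c : Fin d) :
    |z c| ≤ 1 := by
  rw [vnorm, Real.sqrt_eq_one] at h
  have hc : ((z c : ℝ)) ^ 2 ≤ 1 :=
    h ▸ Finset.single_le_sum (f := fun c => ((z c : ℝ)) ^ 2) (fun _ _ => sq_nonneg _)
      (Finset.mem_univ c)
  exact_mod_cast (sq_le_one_iff_abs_le_one _).1 hc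

theorem tsum_vnorm_sub_eq_one_le (a : Fin d → ℤ) :
    ∑' z : Fin d → ℤ, (if vnorm (a - z) = 1 then (1 : ℝ≥0∞) else 0) ≤ 3 ^ d := by
  have hbox : ∀ z, vnorm (a - z) = 1 → z ∈ Finset.Icc (a - 1) (a + 1) := fun z hz => by
    simp only [Finset.mem_Icc, Pi.le_def, ← forall_and]
    intro c
    have := abs_le_one_of_vnorm_eq_one hz c
    simp only [Pi.sub_apply, Pi.add_apply, Pi.one_apply] at this ⊢
    constructor <;> linarith [abs_le.1 this]
  rw [tsum_eq_sum fun z hz => if_neg fun h => hz (hbox z h)]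
  calc _ ≤ ∑ _z ∈ Finset.Icc (a - 1) (a + 1), (1 : ℝ≥0∞) :=
        Finset.sum_le_sum fun _ _ => by split_ifs <;> simp
    _ = 3 ^ d := by
        have h3 : ∀ c, (a c + 1 + 1 - (a c - 1)).toNat = 3 := fun c => by omega
        simp [Pi.card_Icc, Int.card_Icc, h3]

theorem cnorm_nonneg (y : Conf d k) : 0 ≤ cnorm y :=
  Real.sqrt_nonneg _

theorem abs_le_cnorm (y : Conf d k) (l : Fin k) (c : Fin d) :
    |(y l c : ℝ)| ≤ cnorm y := by
  rw [← Real.sqrt_sq_eq_abs, cnorm]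
  refine Real.sqrt_le_sqrt ?_
  calc ((y l c : ℝ)) ^ 2 ≤ ∑ c', ((y l c' : ℝ)) ^ 2 :=
        Finset.single_le_sum (f := fun c' => ((y l c' : ℝ)) ^ 2) (fun _ _ => sq_nonneg _)
          (Finset.mem_univ c)
    _ ≤ ∑ l', ∑ c', ((y l' c' : ℝ)) ^ 2 :=
        Finset.single_le_sum (f := fun l' => ∑ c', ((y l' c' : ℝ)) ^ 2)
          (fun _ _ => by positivity) (Finset.mem_univ l)

theorem sum_abs_sub_le_mul_cnorm (j : Fin k) (x w : Conf d k) :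
    ∑ l : {l // l ≠ j}, ∑ c, |(w l c - x l c : ℝ)| ≤ ((k - 1) * d : ℕ) * cnorm (x - w) := by
  calc _ ≤ ∑ _l : {l // l ≠ j}, ∑ _c : Fin d, cnorm (x - w) := by
        gcongr with l _ c _
        rw [abs_sub_comm]
        exact_mod_cast abs_le_cnorm (x - w) l c
    _ = ((k - 1) * d : ℕ) * cnorm (x - w) := by
        simp [Fintype.card_subtype_compl, mul_assoc]

theorem inv_add_cnorm_pow_le (j : Fin k) (x w : Conf d k) {T : ℝ} (hT : 0 ≤ T) (n : ℕ) :
    ((T + cnorm (x - w) + 1) ^ n)⁻¹ ≤ (((k - 1) * d + 1 : ℕ) : ℝ) ^ n *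
      ((T + 1 + ∑ l : {l // l ≠ j}, ∑ c, |(w l c - x l c : ℝ)|) ^ n)⁻¹ := by
  have hρ := sum_abs_sub_le_mul_cnorm j x w
  have hcn := cnorm_nonneg (x - w)
  have hρ0 : 0 ≤ ∑ l : {l // l ≠ j}, ∑ c, |(w l c - x l c : ℝ)| := by positivity
  rw [← div_eq_mul_inv, ← div_pow, ← inv_pow, ← one_div]
  refine pow_le_pow_left₀ (by positivity) ?_ _
  rw [div_le_div_iff₀ (by positivity) (by positivity), one_mul, Nat.cast_succ]
  nlinarith [(Nat.cast_nonneg _ : (0 : ℝ) ≤ ((k - 1) * d : ℕ))]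

theorem tsum_collision_weight_le {i j : Fin k} (hij : i ≠ j) {T : ℝ} (hT : 0 ≤ T)
    (x : Conf d k) :
    ∑' w : Conf d k, (if vnorm (w i - w j) = 1 then (1 : ℝ≥0∞) else 0) *
        ENNReal.ofReal ((T + cnorm (x - w) + 1) ^ ((k - 1) * d + 1))⁻¹
      ≤ ENNReal.ofReal (3 ^ d * (((k - 1) * d + 1 : ℕ) : ℝ) ^ ((k - 1) * d + 1) *
          4 ^ ((k - 1) * d) / (T + 1)) := by
  set m := (k - 1) * d
  set M : ℝ≥0∞ := ENNReal.ofReal (((m + 1 : ℕ) : ℝ) ^ (m + 1))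
  let e := Equiv.funSplitAt j (Fin d → ℤ)
  let ρ : ({l // l ≠ j} → Fin d → ℤ) → ℝ := fun v => ∑ l, ∑ c, |(v l c - x l c : ℝ)|
  have hpoint : ∀ z v,
      (if vnorm (e.symm (z, v) i - e.symm (z, v) j) = 1 then (1 : ℝ≥0∞) else 0) *
        ENNReal.ofReal ((T + cnorm (x - e.symm (z, v)) + 1) ^ (m + 1))⁻¹
      ≤ (if vnorm (v ⟨i, hij⟩ - z) = 1 then (1 : ℝ≥0∞) else 0) *
        (M * ENNReal.ofReal ((T + 1 + ρ v) ^ (m + 1))⁻¹) := fun z v => by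
    have hi : e.symm (z, v) i = v ⟨i, hij⟩ := by simp [e, Equiv.funSplitAt, Equiv.piSplitAt, hij]
    have hj : e.symm (z, v) j = z := by simp [e, Equiv.funSplitAt, Equiv.piSplitAt]
    have hv : ∀ l : {l // l ≠ j}, e.symm (z, v) l = v l := fun l => by
      simp [e, Equiv.funSplitAt, Equiv.piSplitAt, l.2]
    rw [hi, hj, ← ENNReal.ofReal_mul (by positivity)]
    gcongr
    simpa only [hv] using inv_add_cnorm_pow_le j x (e.symm (z, v)) hT (m + 1)
  calc _ = ∑' v, ∑' z,
        (if vnorm (e.symm (z, v) i - e.symm (z, v) j) = 1 then (1 : ℝ≥0∞) else 0) *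
          ENNReal.ofReal ((T + cnorm (x - e.symm (z, v)) + 1) ^ (m + 1))⁻¹ := by
        rw [← e.symm.tsum_eq, ENNReal.tsum_prod', ENNReal.tsum_comm]
    _ ≤ ∑' v, 3 ^ d * (M * ENNReal.ofReal ((T + 1 + ρ v) ^ (m + 1))⁻¹) := by
        gcongr with v
        refine (ENNReal.tsum_le_tsum (hpoint · v)).trans ?_
        rw [ENNReal.tsum_mul_right]
        gcongr
        exact tsum_vnorm_sub_eq_one_le _
    _ ≤ 3 ^ d * (M * ENNReal.ofReal (4 ^ m / (T + 1))) := by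
        rw [ENNReal.tsum_mul_left, ENNReal.tsum_mul_left]
        gcongr
        simpa [Fintype.card_subtype_compl] using
          tsum_ofReal_inv_add_sum_sum_abs_sub_pow_le (fun l : {l // l ≠ j} => x l)
            (A := T + 1) (by linarith)
    _ = _ := by
        rw [← ENNReal.ofReal_mul (by positivity), ← ENNReal.ofReal_ofNat 3,
          ← ENNReal.ofReal_pow (by norm_num), ← ENNReal.ofReal_mul (by positivity)]
        congr 1
        ring

end

theorem lattice_sum_collision_general (d k : ℕ) (i j : Fin k) (hij : i < j) :
    ∃ C : ℝ, 0 < C ∧ ∀ T : ℝ, 0 ≤ T → ∀ x : Conf d k,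
      Summable (fun w : Conf d k =>
        (if vnorm (w i - w j) = 1 then (1 : ℝ) else 0) *
          (T + cnorm (x - w) + 1) ^ (-(((k : ℝ) - 1) * d + 1))) ∧
      (∑' w : Conf d k,
        (if vnorm (w i - w j) = 1 then (1 : ℝ) else 0) *
          (T + cnorm (x - w) + 1) ^ (-(((k : ℝ) - 1) * d + 1))) ≤ C / (T + 1) := by
  set m := (k - 1) * d
  have hexp : (((k : ℝ) - 1) * d + 1) = ((m + 1 : ℕ) : ℝ) := by
    push_cast [m, Nat.cast_sub (Nat.one_le_of_lt j.isLt)]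
    ring
  refine ⟨3 ^ d * ((m + 1 : ℕ) : ℝ) ^ (m + 1) * 4 ^ m, by positivity, fun T hT x => ?_⟩
  have hcn : ∀ w : Conf d k, 0 < T + cnorm (x - w) + 1 := fun w => by
    linarith [cnorm_nonneg (x - w)]
  refine summable_and_tsum_le_of_tsum_ofReal_le (fun w => ?_) (by positivity) ?_
  · have := (hcn w).le
    positivity
  · refine le_of_eq_of_le (tsum_congr fun w => ?_) (tsum_collision_weight_le hij.ne hT x)
    rw [hexp, Real.rpow_neg (hcn w).le, Real.rpow_natCast]
    split_ifs <;> simp [m]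

/-- Lattice sum estimate: for integers `d ≥ 1`, `k ≥ 2` and fixed `1 ≤ i < j ≤ k` there is a
constant `C = C(k,d)` such that for every `T ≥ 0` and `x ∈ (ℤ^d)^k`,
`Σ_{w ∈ (ℤ^d)^k} 1{‖w_i − w_j‖ = 1}(T + ‖x − w‖ + 1)^{−((k−1)d+1)} ≤ C/(T+1)`. -/
theorem lattice_sum_collision (d k : ℕ) (hd : 1 ≤ d) (hk : 2 ≤ k)
    (i j : Fin k) (hij : i < j) :
    ∃ C : ℝ, 0 < C ∧ ∀ T : ℝ, 0 ≤ T → ∀ x : Conf d k,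
      Summable (fun w : Conf d k =>
        (if vnorm (w i - w j) = 1 then (1 : ℝ) else 0) *
          (T + cnorm (x - w) + 1) ^ (-(((k : ℝ) - 1) * d + 1))) ∧
      (∑' w : Conf d k,
        (if vnorm (w i - w j) = 1 then (1 : ℝ) else 0) *
          (T + cnorm (x - w) + 1) ^ (-(((k : ℝ) - 1) * d + 1))) ≤ C / (T + 1) :=
  lattice_sum_collision_general d k i j hij

end SSEPPaper
end
end

section
/- Let d ≥ 2 be an integer. There exists a constant C = C(d) such that for every t ≥ 0: if d = 2 then ∫_0^t (√(t−s) + 1)^{−d} (√s + 1)^{−1} ds ≤ C log(t+2) / (√t + 1), and if d ≥ 3 then ∫_0^t (√(t−s) + 1)^{−d} (√s + 1)^{−1} ds ≤ C / (√t + 1). -/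
/-!
Split `[0, t]` at `t / 2`. On each half one of the two factors is evaluated at a point `≥ t / 2`,
where `(√x + 1)⁻ᵏ ≤ (2 / (√t + 1))ᵏ`, and the other factor is integrated over `[0, t / 2]`.
The integrals `∫₀ᵀ (√u + 1)⁻ᵏ du` are `O(√T)`, `O(log T)` and `O(1)` for `k = 1`, `k = 2` and
`k ≥ 3`, as the antiderivatives `2√u`, `log (u + 1)` and `-2 (√u + 1)⁻¹` show. With `k = 1` the
first half contributes `(2 / (√t + 1))ᵈ · O(√t) = O(1 / (√t + 1))` because `d ≥ 2`.
-/

open intervalIntegral Set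

noncomputable def sqrtDecay (k : ℕ) (x : ℝ) : ℝ := ((√x + 1) ^ k)⁻¹

lemma continuous_sqrtDecay (k : ℕ) : Continuous (sqrtDecay k) := by
  unfold sqrtDecay
  exact Continuous.inv₀ (by fun_prop) fun x => by positivity

lemma sqrtDecay_nonneg (k : ℕ) (x : ℝ) : 0 ≤ sqrtDecay k x := by
  unfold sqrtDecay; positivity

lemma sqrtDecay_antitone (k : ℕ) : Antitone (sqrtDecay k) := fun x y hxy => by
  unfold sqrtDecay
  gcongr

lemma intervalIntegrable_sqrtDecay_mul_sqrtDecay (a b : ℕ) (t c d : ℝ) :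
    IntervalIntegrable (fun s => sqrtDecay a (t - s) * sqrtDecay b s) MeasureTheory.volume c d :=
  ((continuous_sqrtDecay a).comp (by fun_prop)).mul (continuous_sqrtDecay b)
    |>.intervalIntegrable _ _

lemma sqrt_add_one_le_two_mul_sqrt_half_add_one {t : ℝ} (ht : 0 ≤ t) :
    √t + 1 ≤ 2 * (√(t / 2) + 1) := by
  have : √t ≤ 2 * √(t / 2) := by
    rw [Real.sqrt_le_iff, mul_pow, Real.sq_sqrt (by positivity)]
    constructor <;> [positivity; linarith]
  linarith

lemma sqrtDecay_le_of_half_le {t x : ℝ} (ht : 0 ≤ t) (hx : t / 2 ≤ x) (k : ℕ) :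
    sqrtDecay k x ≤ (2 / (√t + 1)) ^ k := by
  calc sqrtDecay k x ≤ sqrtDecay k (t / 2) := sqrtDecay_antitone k hx
    _ ≤ (2 / (√t + 1)) ^ k := by
      rw [sqrtDecay, ← inv_pow, inv_eq_one_div]
      refine pow_le_pow_left₀ (by positivity) ?_ k
      rw [div_le_div_iff₀ (by positivity) (by positivity)]
      linarith [sqrt_add_one_le_two_mul_sqrt_half_add_one ht]

lemma integral_sqrtDecay_mul_sqrtDecay_lower_half_le {t : ℝ} (ht : 0 ≤ t) (a b : ℕ) :
    ∫ s in 0..t / 2, sqrtDecay a (t - s) * sqrtDecay b s ≤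
      (2 / (√t + 1)) ^ a * ∫ s in 0..t / 2, sqrtDecay b s := by
  rw [← integral_const_mul]
  refine integral_mono_on (by positivity) (intervalIntegrable_sqrtDecay_mul_sqrtDecay a b t _ _)
    ((continuous_const.mul (continuous_sqrtDecay b)).intervalIntegrable _ _) fun s hs => ?_
  exact mul_le_mul_of_nonneg_right (sqrtDecay_le_of_half_le ht (by linarith [hs.2]) a)
    (sqrtDecay_nonneg b s)

lemma integral_sqrtDecay_mul_sqrtDecay_le {t : ℝ} (ht : 0 ≤ t) (a b : ℕ) :
    ∫ s in 0..t, sqrtDecay a (t - s) * sqrtDecay b s ≤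
      (2 / (√t + 1)) ^ a * (∫ s in 0..t / 2, sqrtDecay b s) +
        (2 / (√t + 1)) ^ b * ∫ s in 0..t / 2, sqrtDecay a s := by
  have hupper : ∫ s in t / 2..t, sqrtDecay a (t - s) * sqrtDecay b s =
      ∫ s in 0..t / 2, sqrtDecay b (t - s) * sqrtDecay a s := by
    have := integral_comp_sub_left (fun u => sqrtDecay a u * sqrtDecay b (t - u)) t
      (a := t / 2) (b := t)
    simp only [sub_sub_cancel, sub_self, show t - t / 2 = t / 2 by ring] at this
    simpa only [mul_comm] using this
  rw [← integral_add_adjacent_intervals (intervalIntegrable_sqrtDecay_mul_sqrtDecay a b t _ _)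
    (intervalIntegrable_sqrtDecay_mul_sqrtDecay a b t _ _), hupper]
  exact add_le_add (integral_sqrtDecay_mul_sqrtDecay_lower_half_le ht a b)
    (integral_sqrtDecay_mul_sqrtDecay_lower_half_le ht b a)

lemma integral_sqrtDecay_one_le {T : ℝ} (hT : 0 ≤ T) :
    ∫ u in 0..T, sqrtDecay 1 u ≤ 2 * √T := by
  have hderiv : ∀ x ∈ Ioo 0 T, HasDerivAt (fun u => 2 * √u) (1 / √x) x := fun x hx =>
    ((Real.hasDerivAt_sqrt hx.1.ne').const_mul 2).congr_deriv (by field_simp)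
  have := integral_le_sub_of_hasDeriv_right_of_le hT (by fun_prop)
    (fun x hx => (hderiv x hx).hasDerivWithinAt) (continuous_sqrtDecay 1).integrableOn_Icc
    fun x hx => by
      have := Real.sqrt_pos.2 hx.1
      rw [sqrtDecay, pow_one, ← one_div]
      gcongr
      linarith
  simpa using this

lemma integral_sqrtDecay_two_le {T : ℝ} (hT : 0 ≤ T) :
    ∫ u in 0..T, sqrtDecay 2 u ≤ Real.log (T + 1) := by
  have hderiv : ∀ x ∈ Ioo 0 T, HasDerivAt (fun u => Real.log (u + 1)) (1 / (x + 1)) x :=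
    fun x hx => ((hasDerivAt_id x).add_const 1).log (by linarith [hx.1] : (0 : ℝ) < x + 1).ne'
  have := integral_le_sub_of_hasDeriv_right_of_le hT
    (ContinuousOn.log (f := fun u => u + 1) (by fun_prop) fun x hx =>
      (by linarith [hx.1] : (0 : ℝ) < x + 1).ne')
    (fun x hx => (hderiv x hx).hasDerivWithinAt) (continuous_sqrtDecay 2).integrableOn_Icc
    fun x hx => by
      rw [sqrtDecay, ← one_div]
      apply one_div_le_one_div_of_le (by linarith [hx.1])
      nlinarith [Real.sq_sqrt hx.1.le, Real.sqrt_nonneg x]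
  simpa using this

lemma integral_sqrtDecay_le_two {k : ℕ} (hk : 3 ≤ k) {T : ℝ} (hT : 0 ≤ T) :
    ∫ u in 0..T, sqrtDecay k u ≤ 2 := by
  have hderiv : ∀ x ∈ Ioo 0 T, HasDerivAt (fun u => -2 * (√u + 1)⁻¹)
      (1 / (√x * (√x + 1) ^ 2)) x := fun x hx => by
    have hsx : 0 < √x := Real.sqrt_pos.2 hx.1
    refine ((((Real.hasDerivAt_sqrt hx.1.ne').add_const 1).inv (by positivity)).const_mul
      (-2)).congr_deriv ?_
    field_simp
  have hcont : Continuous fun u : ℝ => -2 * (√u + 1)⁻¹ :=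
    continuous_const.mul ((by fun_prop : Continuous fun u : ℝ => √u + 1).inv₀
      fun u => by positivity)
  have := integral_le_sub_of_hasDeriv_right_of_le hT hcont.continuousOn
    (fun x hx => (hderiv x hx).hasDerivWithinAt) (continuous_sqrtDecay k).integrableOn_Icc
    fun x hx => by
      have hsx : 0 < √x := Real.sqrt_pos.2 hx.1
      calc sqrtDecay k x ≤ 1 / ((√x + 1) * (√x + 1) ^ 2) := by
            rw [sqrtDecay, ← one_div, ← pow_succ']
            gcongr
            linarith
        _ ≤ 1 / (√x * (√x + 1) ^ 2) := by gcongr; linarith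
  have hT' : 0 ≤ (√T + 1)⁻¹ := by positivity
  simp only [Real.sqrt_zero, zero_add, inv_one] at this
  linarith

lemma integral_sqrtDecay_mul_sqrtDecay_one_le {t : ℝ} (ht : 0 ≤ t) {d : ℕ} (hd : 2 ≤ d) :
    ∫ s in 0..t, sqrtDecay d (t - s) * sqrtDecay 1 s ≤
      (2 ^ (d + 1) + 2 * ∫ s in 0..t / 2, sqrtDecay d s) / (√t + 1) := by
  set Q := √t + 1
  have hQ : 1 ≤ Q := by simp [Q]
  have hJ : ∫ s in 0..t / 2, sqrtDecay 1 s ≤ 2 * Q := calc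
    _ ≤ 2 * √(t / 2) := integral_sqrtDecay_one_le (by positivity)
    _ ≤ 2 * Q := by gcongr; linarith [Real.sqrt_le_sqrt (show t / 2 ≤ t by linarith)]
  have hfirst : (2 / Q) ^ d * ∫ s in 0..t / 2, sqrtDecay 1 s ≤ 2 ^ (d + 1) / Q := calc
    _ ≤ 2 ^ d / Q ^ 2 * (2 * Q) := by
      rw [div_pow]
      gcongr
      exact integral_nonneg (by positivity) fun s _ => sqrtDecay_nonneg 1 s
    _ = 2 ^ (d + 1) / Q := by field_simp; ring
  calc _ ≤ _ := integral_sqrtDecay_mul_sqrtDecay_le ht d 1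
    _ ≤ 2 ^ (d + 1) / Q + 2 / Q * ∫ s in 0..t / 2, sqrtDecay d s := by
      rw [pow_one]; gcongr
    _ = _ := by ring

/-- Convolution-type integral bound: for an integer `d ≥ 2` there is a constant `C = C(d)` such
that for every `t ≥ 0`, `∫_0^t (√(t−s)+1)^{−d}(√s+1)^{−1} ds` is bounded by
`C log(t+2)/(√t+1)` when `d = 2` and by `C/(√t+1)` when `d ≥ 3`. -/
theorem integral_convolution_bound (d : ℕ) (hd : 2 ≤ d) :
    ∃ C : ℝ, 0 < C ∧ ∀ t : ℝ, 0 ≤ t →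
      (d = 2 →
        (∫ s in (0 : ℝ)..t, 1 / ((Real.sqrt (t - s) + 1) ^ d * (Real.sqrt s + 1))) ≤
          C * Real.log (t + 2) / (Real.sqrt t + 1)) ∧
      (3 ≤ d →
        (∫ s in (0 : ℝ)..t, 1 / ((Real.sqrt (t - s) + 1) ^ d * (Real.sqrt s + 1))) ≤
          C / (Real.sqrt t + 1)) := by
  refine ⟨2 ^ (d + 2) + 4, by positivity, fun t ht => ?_⟩
  have hconv : ∫ s in 0..t, 1 / ((√(t - s) + 1) ^ d * (√s + 1)) ≤
      (2 ^ (d + 1) + 2 * ∫ s in 0..t / 2, sqrtDecay d s) / (√t + 1) := by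
    simpa only [sqrtDecay, pow_one, one_div, mul_inv] using
      integral_sqrtDecay_mul_sqrtDecay_one_le ht hd
  refine ⟨fun hd2 => hconv.trans ?_, fun hd3 => hconv.trans ?_⟩
  · subst hd2
    have hJ := integral_sqrtDecay_two_le (T := t / 2) (by positivity)
    have hlog : Real.log (t / 2 + 1) ≤ Real.log (t + 2) :=
      Real.log_le_log (by positivity) (by linarith)
    have hlog2 : Real.log 2 ≤ Real.log (t + 2) := Real.log_le_log (by positivity) (by linarith)
    gcongr ?_ / _
    linarith [Real.log_two_gt_d9]
  · gcongr ?_ / _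
    linarith [integral_sqrtDecay_le_two hd3 (T := t / 2) (by positivity),
      pow_le_pow_right₀ (by norm_num : (1 : ℝ) ≤ 2) (by omega : d + 1 ≤ d + 2)]
end

section
/- For every m > 0 and every c₁, c₂ > 0 there exists a constant C such that for all t ≥ 2 and all r ≥ 0, (√t + 1)^{−m} · exp( − c₁ t (log t)^{−2} Φ( r log t / (c₂² t) ) ) ≤ C (√t + r + 1)^{−m}. -/
noncomputable section

/-- `Φ(u) = sup_{w ∈ ℝ} (uw − w² cosh w)`. -/
def Phi (u : ℝ) : ℝ := ⨆ w : ℝ, (u * w - w ^ 2 * Real.cosh w)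

/-!
Since `Φ(u) ≳ u² / (1 + u)`, and `log t ≤ 2√t`, the exponent `c₁ t (log t)⁻² Φ(r log t / (c₂² t))`
is at least `K x² / (1 + x)` with `x = r / (√t + 1)` and `K` depending only on `c₁, c₂`.
Hence the exponential factor beats `((√t + r + 1) / (√t + 1))^m = (1 + x)^m`, because the
logarithm grows slower than any linear function.
-/

open Real

lemma bddAbove_range_Phi (u : ℝ) :
    BddAbove (Set.range fun w : ℝ => u * w - w ^ 2 * cosh w) := by
  refine ⟨u ^ 2 / 4, ?_⟩
  rintro _ ⟨w, rfl⟩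
  nlinarith [one_le_cosh w, sq_nonneg (w - u / 2), sq_nonneg w]

lemma le_Phi (u w : ℝ) : u * w - w ^ 2 * cosh w ≤ Phi u :=
  le_ciSup (bddAbove_range_Phi u) w

lemma cosh_le_two {w : ℝ} (hw : |w| ≤ 1) : cosh w ≤ 2 := by
  have hcosh_one : cosh 1 ≤ 2 := by
    rw [cosh_eq, exp_neg]
    have he : exp 1 < 2.7182818286 := exp_one_lt_d9
    have hinv : (exp 1)⁻¹ ≤ 1 := inv_le_one_of_one_le₀ (one_le_exp zero_le_one)
    linarith
  exact (cosh_le_cosh.mpr (by rwa [abs_one])).trans hcosh_one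

lemma sq_div_le_Phi {u : ℝ} (hu : 0 ≤ u) : u ^ 2 / (8 * (1 + u)) ≤ Phi u := by
  set w := u / (4 * (1 + u)) with hw
  have hw0 : 0 ≤ w := by positivity
  have hw1 : w ≤ 1 := by
    rw [hw, div_le_one (by positivity)]
    linarith
  have hcosh : w ^ 2 * cosh w ≤ w ^ 2 * 2 :=
    mul_le_mul_of_nonneg_left (cosh_le_two (abs_le.mpr ⟨by linarith, hw1⟩)) (sq_nonneg w)
  have hgain : u ^ 2 / (8 * (1 + u)) ≤ u * w - w ^ 2 * 2 := by
    rw [hw, div_le_iff₀ (by positivity)]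
    field_simp
    nlinarith [sq_nonneg u, mul_nonneg (sq_nonneg u) hu]
  linarith [le_Phi u w]

-- `log y ≤ a y - 1 - log a` at `a = K / m`, combined with `(y - 1)² / y ≥ y - 2` for `y = q / p`.
lemma mul_log_div_le (m K : ℝ) (hm : 0 < m) (hK : 0 < K) {p q : ℝ} (hp : 0 < p) (hq : 0 < q) :
    m * log (q / p) ≤ 2 * K - m - m * log (K / m) + K * ((q - p) ^ 2 / (p * q)) := by
  have hy : 0 < q / p := div_pos hq hp
  have hlog : log (q / p) ≤ K / m * (q / p) - 1 - log (K / m) := by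
    have h := log_le_sub_one_of_pos (mul_pos (div_pos hK hm) hy)
    rw [log_mul (div_pos hK hm).ne' hy.ne'] at h
    linarith
  have hquad : q / p - 2 ≤ (q - p) ^ 2 / (p * q) := by
    rw [show (q - p) ^ 2 / (p * q) = q / p - 2 + p / q by field_simp; ring]
    linarith [div_pos hp hq]
  have hmlog : m * log (q / p) ≤ K * (q / p) - m - m * log (K / m) := by
    have := mul_le_mul_of_nonneg_left hlog hm.le
    rwa [show m * (K / m * (q / p) - 1 - log (K / m)) = K * (q / p) - m - m * log (K / m) by
      field_simp] at this
  nlinarith [mul_le_mul_of_nonneg_left hquad hK.le]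

lemma log_le_two_mul_sqrt {t : ℝ} (ht : 0 < t) : log t ≤ 2 * √t := by
  have h := log_le_sub_one_of_pos (sqrt_pos.mpr ht)
  rw [log_sqrt ht.le] at h
  linarith

lemma sq_div_le_mul_Phi {c₁ c₂ t r : ℝ} (hc₁ : 0 ≤ c₁) (hc₂ : 0 < c₂) (ht : 1 < t) (hr : 0 ≤ r) :
    c₁ / (8 * c₂ ^ 2 * (c₂ ^ 2 + 2)) * (r ^ 2 / ((√t + 1) * (√t + r + 1))) ≤
      c₁ * t / (log t) ^ 2 * Phi (r * log t / (c₂ ^ 2 * t)) := by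
  have ht0 : 0 < t := by linarith
  have hL : 0 < log t := log_pos ht
  have hs : 0 ≤ √t := sqrt_nonneg t
  have hst : √t ^ 2 = t := sq_sqrt ht0.le
  have hden : c₂ ^ 2 * t + r * log t ≤ (c₂ ^ 2 + 2) * ((√t + 1) * (√t + r + 1)) := by
    nlinarith [mul_le_mul_of_nonneg_left (log_le_two_mul_sqrt ht0) hr, sq_nonneg c₂,
      mul_nonneg (sq_nonneg c₂) hs, mul_nonneg hr hs]
  have hPhi := mul_le_mul_of_nonneg_left (sq_div_le_Phi (u := r * log t / (c₂ ^ 2 * t))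
    (by positivity)) (by positivity : 0 ≤ c₁ * t / (log t) ^ 2)
  refine le_trans ?_ hPhi
  rw [show c₁ * t / log t ^ 2 * ((r * log t / (c₂ ^ 2 * t)) ^ 2 /
      (8 * (1 + r * log t / (c₂ ^ 2 * t)))) =
      c₁ * r ^ 2 / (8 * c₂ ^ 2 * (c₂ ^ 2 * t + r * log t)) by field_simp,
    show c₁ / (8 * c₂ ^ 2 * (c₂ ^ 2 + 2)) * (r ^ 2 / ((√t + 1) * (√t + r + 1))) =
      c₁ * r ^ 2 / (8 * c₂ ^ 2 * ((c₂ ^ 2 + 2) * ((√t + 1) * (√t + r + 1)))) by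
      field_simp]
  gcongr

/-- For every `m > 0` and `c₁, c₂ > 0` there is a constant `C` such that for all `t ≥ 2` and
`r ≥ 0`, `(√t+1)^{−m} exp(−c₁ t (log t)^{−2} Φ(r log t / (c₂² t))) ≤ C (√t + r + 1)^{−m}`. -/
theorem Phi_tail_absorption (m c₁ c₂ : ℝ) (hm : 0 < m) (hc₁ : 0 < c₁) (hc₂ : 0 < c₂) :
    ∃ C : ℝ, 0 < C ∧ ∀ t r : ℝ, 2 ≤ t → 0 ≤ r →
      (Real.sqrt t + 1) ^ (-m) *
          Real.exp (-(c₁ * t / (Real.log t) ^ 2 * Phi (r * Real.log t / (c₂ ^ 2 * t)))) ≤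
        C * (Real.sqrt t + r + 1) ^ (-m) := by
  set K := c₁ / (8 * c₂ ^ 2 * (c₂ ^ 2 + 2))
  have hK : 0 < K := by positivity
  refine ⟨exp (2 * K - m - m * log (K / m)), exp_pos _, fun t r ht hr => ?_⟩
  have hp : 0 < √t + 1 := by positivity
  have hq : 0 < √t + r + 1 := by positivity
  have hlog := mul_log_div_le m K hm hK hp hq
  rw [log_div hq.ne' hp.ne', show √t + r + 1 - (√t + 1) = r by ring] at hlog
  have hexponent := sq_div_le_mul_Phi hc₁.le hc₂ (by linarith : (1 : ℝ) < t) hr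
  rw [rpow_def_of_pos hp, rpow_def_of_pos hq, ← exp_add, ← exp_add, exp_le_exp]
  linarith

end
end
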